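/- arXiv:2508.04376 — 2 statements merged into one kernel-verified Lean document; each statement's English description precedes it below -/
import Mathlib

section
/- Under the stated hypotheses, the adjoint S′ has Dunford's property (C): for every closed set F ⊆ ℂ, the local spectral subspace {φ ∈ X′ : σ_{S′}(φ) ⊆ F} is a norm-closed linear subspace of X′. -/
/-!
The local spectral subspace is `⊤` or `⊥`. If `Φ(G) ⊆ F`, then for every `φ` we have
`σ_{S′}(φ) ⊆ σ(S′) ⊆ σ(S) ⊆ closure Φ(G) ⊆ F`. Otherwise `Φ(w₀) ∉ F` for some `w₀ ∈ G`. If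
`σ_{S′}(φ) ⊆ F` and `Φ(w) ∉ F`, a local resolvent `g` of `φ` at `Φ(w)` gives
`φ(f w) = g(Φ w)((S - Φ w) f w) = 0`. Hence the analytic function `φ ∘ f` vanishes near `w₀`,
so on all of `G`, and `φ = 0` by density of the span of `f(G)`.
-/

/-- The adjoint of `S` acting on the continuous dual: `(dualOp S φ) x = φ (S x)`. -/
noncomputable def dualOp {X : Type*} [NormedAddCommGroup X] [NormedSpace ℂ X]
    (S : X →L[ℂ] X) : (X →L[ℂ] ℂ) →L[ℂ] (X →L[ℂ] ℂ) :=
  (ContinuousLinearMap.compL ℂ X X ℂ).flip S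

/-- The local resolvent set `ρ_T(y)`: the union of all open `U ⊆ ℂ` admitting an
analytic `g : U → X` with `(T - z) g z = y` on `U`. -/
def localResolvent {X : Type*} [NormedAddCommGroup X] [NormedSpace ℂ X]
    (T : X →L[ℂ] X) (y : X) : Set ℂ :=
  {z | ∃ U : Set ℂ, IsOpen U ∧ z ∈ U ∧
    ∃ g : ℂ → X, DifferentiableOn ℂ g U ∧ ∀ w ∈ U, T (g w) - w • g w = y}

/-- The local spectrum `σ_T(y) = ℂ ∖ ρ_T(y)`. -/
def localSpectrum {X : Type*} [NormedAddCommGroup X] [NormedSpace ℂ X]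
    (T : X →L[ℂ] X) (y : X) : Set ℂ :=
  (localResolvent T y)ᶜ

section LocalSpectrum

variable {E : Type*} [NormedAddCommGroup E] [NormedSpace ℂ E]

lemma localSpectrum_zero (T : E →L[ℂ] E) : localSpectrum T 0 = ∅ :=
  Set.compl_empty_iff.mpr <| Set.eq_univ_of_forall fun _ =>
    ⟨Set.univ, isOpen_univ, trivial, 0, differentiableOn_const 0, fun _ _ => by simp⟩

lemma localSpectrum_subset_spectrum [CompleteSpace E] (T : E →L[ℂ] E) (y : E) :
    localSpectrum T y ⊆ spectrum ℂ T := by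
  intro z hz
  by_contra hzρ
  refine hz ⟨resolventSet ℂ T, spectrum.isOpen_resolventSet T, not_not.mp hzρ,
    fun w => -resolvent T w y, fun w hw => ?_, fun w hw => ?_⟩
  · exact ((spectrum.hasDerivAt_resolvent_const_left hw).differentiableAt.clm_apply
      (differentiableAt_const y)).neg.differentiableWithinAt
  · have h := congrArg (· y) (Ring.mul_inverse_cancel _ hw)
    simpa [resolvent, Algebra.algebraMap_eq_smul_one, neg_add_eq_sub] using h

end LocalSpectrum

section DualOp

variable {X : Type*} [NormedAddCommGroup X] [NormedSpace ℂ X]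

@[simp]
lemma dualOp_apply (S : X →L[ℂ] X) (φ : X →L[ℂ] ℂ) (x : X) : dualOp S φ x = φ (S x) := rfl

lemma dualOp_one : dualOp (1 : X →L[ℂ] X) = 1 := rfl

lemma dualOp_mul (A B : X →L[ℂ] X) : dualOp (A * B) = dualOp B * dualOp A := rfl

set_option synthInstance.maxHeartbeats 100000 in
lemma dualOp_smul_one_sub (z : ℂ) (S : X →L[ℂ] X) :
    dualOp (z • 1 - S) = z • 1 - dualOp S := by
  ext φ x
  simp

lemma isUnit_dualOp {A : X →L[ℂ] X} (h : IsUnit A) : IsUnit (dualOp A) := by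
  obtain ⟨u, rfl⟩ := h
  exact ⟨⟨dualOp u.val, dualOp u.inv, by rw [← dualOp_mul, u.inv_val, dualOp_one],
    by rw [← dualOp_mul, u.val_inv, dualOp_one]⟩, rfl⟩

lemma spectrum_dualOp_subset (S : X →L[ℂ] X) : spectrum ℂ (dualOp S) ⊆ spectrum ℂ S := by
  refine fun z => mt fun hz => ?_
  rw [spectrum.mem_resolventSet_iff, Algebra.algebraMap_eq_smul_one] at hz ⊢
  exact dualOp_smul_one_sub z S ▸ isUnit_dualOp hz

lemma apply_eq_zero_of_notMem_localSpectrum_dualOp {S : X →L[ℂ] X} {φ : X →L[ℂ] ℂ}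
    {x : X} {c : ℂ} (hx : S x = c • x) (hc : c ∉ localSpectrum (dualOp S) φ) : φ x = 0 := by
  obtain ⟨U, -, hcU, g, -, hg⟩ := not_not.mp hc
  simpa [hx] using (congrArg (· x) (hg c hcU)).symm

end DualOp

lemma eq_zero_of_localSpectrum_dualOp_subset {X : Type*} [NormedAddCommGroup X]
    [NormedSpace ℂ X] {S : X →L[ℂ] X} {G : Set ℂ} (hG : IsOpen G) (hGconn : IsPreconnected G)
    {Φ : ℂ → ℂ} (hΦ : ContinuousOn Φ G) {f : ℂ → X} (hf : DifferentiableOn ℂ f G)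
    (heig : ∀ w ∈ G, S (f w) = Φ w • f w) (hdense : Dense (Submodule.span ℂ (f '' G) : Set X))
    {F : Set ℂ} (hF : IsClosed F) {w₀ : ℂ} (hw₀ : w₀ ∈ G) (hw₀F : Φ w₀ ∉ F)
    {φ : X →L[ℂ] ℂ} (hφ : localSpectrum (dualOp S) φ ⊆ F) : φ = 0 := by
  have hvanish : ∀ w ∈ G ∩ Φ ⁻¹' Fᶜ, φ (f w) = 0 := fun w hw =>
    apply_eq_zero_of_notMem_localSpectrum_dualOp (heig w hw.1) fun h => hw.2 (hφ h)
  have hnhds : G ∩ Φ ⁻¹' Fᶜ ∈ nhds w₀ :=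
    (hΦ.isOpen_inter_preimage hG hF.isOpen_compl).mem_nhds ⟨hw₀, hw₀F⟩
  have hanalytic : AnalyticOnNhd ℂ (φ ∘ f) G :=
    (φ.differentiable.comp_differentiableOn hf).analyticOnNhd hG
  have hzero : Set.EqOn (φ ∘ f) 0 G := hanalytic.eqOn_zero_of_preconnected_of_eventuallyEq_zero
    hGconn hw₀ (Filter.eventuallyEq_of_mem hnhds hvanish)
  exact ContinuousLinearMap.ext_on hdense <| Set.forall_mem_image.mpr fun w hw => hzero hw

theorem stmt_6_general (X : Type*) [NormedAddCommGroup X] [NormedSpace ℂ X]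
    (S : X →L[ℂ] X)
    (G : Set ℂ) (hG : IsOpen G) (hGconn : IsConnected G)
    (Φ : ℂ → ℂ) (hΦ : DifferentiableOn ℂ Φ G)
    (f : ℂ → X) (hf : DifferentiableOn ℂ f G)
    (heig : ∀ w ∈ G, S (f w) = Φ w • f w)
    (hdense : Dense (Submodule.span ℂ (f '' G) : Set X))
    (hspec : spectrum ℂ S ⊆ closure (Φ '' G))
    (F : Set ℂ) (hF : IsClosed F) :
    ∃ M : Submodule ℂ (X →L[ℂ] ℂ),
      (M : Set (X →L[ℂ] ℂ)) = {φ : X →L[ℂ] ℂ | localSpectrum (dualOp S) φ ⊆ F} ∧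
      IsClosed (M : Set (X →L[ℂ] ℂ)) := by
  by_cases hΦF : Φ '' G ⊆ F
  · have hσF : spectrum ℂ S ⊆ F := hspec.trans (closure_minimal hΦF hF)
    refine ⟨⊤, ?_, isClosed_univ⟩
    ext φ
    simpa using (localSpectrum_subset_spectrum _ φ).trans ((spectrum_dualOp_subset S).trans hσF)
  · obtain ⟨_, ⟨w₀, hw₀, rfl⟩, hw₀F⟩ := Set.not_subset.mp hΦF
    refine ⟨⊥, ?_, isClosed_singleton⟩
    ext φ
    refine ⟨fun h => ?_, fun h => ?_⟩
    · simp [(Submodule.mem_bot ℂ).mp h, localSpectrum_zero]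
    · exact eq_zero_of_localSpectrum_dualOp_subset hG hGconn.isPreconnected hΦ.continuousOn hf
        heig hdense hF hw₀ hw₀F h

/-- under the eigenvector-family hypotheses, the adjoint `S′` has
Dunford's property (C): for every closed `F ⊆ ℂ`, the local spectral subspace
`{φ ∈ X′ : σ_{S′}(φ) ⊆ F}` is a norm-closed linear subspace of `X′`. -/
theorem stmt_6 (X : Type*) [NormedAddCommGroup X] [NormedSpace ℂ X] [CompleteSpace X]
    (S : X →L[ℂ] X)
    (G : Set ℂ) (hG : IsOpen G) (hGne : G.Nonempty) (hGconn : IsConnected G)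
    (Φ : ℂ → ℂ) (hΦ : DifferentiableOn ℂ Φ G) (hΦnc : ∃ a ∈ G, ∃ b ∈ G, Φ a ≠ Φ b)
    (f : ℂ → X) (hf : DifferentiableOn ℂ f G)
    (hfne : ∀ w ∈ G, f w ≠ 0) (heig : ∀ w ∈ G, S (f w) = Φ w • f w)
    (hdense : Dense (Submodule.span ℂ (f '' G) : Set X))
    (hspec : spectrum ℂ S ⊆ closure (Φ '' G))
    (F : Set ℂ) (hF : IsClosed F) :
    ∃ M : Submodule ℂ (X →L[ℂ] ℂ),
      (M : Set (X →L[ℂ] ℂ)) = {φ : X →L[ℂ] ℂ | localSpectrum (dualOp S) φ ⊆ F} ∧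
      IsClosed (M : Set (X →L[ℂ] ℂ)) :=
  stmt_6_general X S G hG hGconn Φ hΦ f hf heig hdense hspec F hF
end

section
/- For every nonempty relatively open subset U of the closed disc {z ∈ ℂ : |z − 1| ≤ 1}, the glocal spectral subspace 𝔛_{C*}(Ū) of the adjoint Cesàro operator C* on ℓ²(ℕ, ℂ) is dense in ℓ², where Ū denotes the closure of U. -/
/-- `C` is the Cesàro operator on `ℓ²(ℕ, ℂ)`: `(C a)ₙ = (1/(n+1)) ∑_{k=0}^{n} a_k`. -/
def IsCesaro (C : lp (fun _ : ℕ => ℂ) 2 →L[ℂ] lp (fun _ : ℕ => ℂ) 2) : Prop :=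
  ∀ (a : lp (fun _ : ℕ => ℂ) 2) (n : ℕ),
    C a n = (∑ k ∈ Finset.range (n + 1), a k) / (n + 1)

/-- The glocal spectral subspace `𝔛_T(F)`: all `y` admitting an analytic solution
`g : ℂ ∖ F → X` of `(T - z) g z = y`. -/
def glocalSubspace {X : Type*} [NormedAddCommGroup X] [NormedSpace ℂ X]
    (T : X →L[ℂ] X) (F : Set ℂ) : Set X :=
  {y | ∃ g : ℂ → X, DifferentiableOn ℂ g Fᶜ ∧ ∀ z ∈ Fᶜ, T (g z) - z • g z = y}

/-!
For `1/2 < re w` the sequence `bₙ(w) = ∏_{k<n} (1 - w/(k+1))` decays like `(n+1)^{-re w}`, so it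
lies in `ℓ²`, and `bₙ/(n+1) = w⁻¹ (bₙ - bₙ₊₁)`; since `(C* y)ₖ = ∑_{n ≥ k} yₙ/(n+1)`, telescoping
gives `C* b(w) = w⁻¹ b(w)`. Inversion maps the open disc `|z - 1| < 1` onto the half-plane
`re w > 1/2`, and a nonempty relatively open `U` meets the open disc in a nonempty open set, so
`U` contains a nonempty open set of such eigenvalues `w⁻¹`. If `x` is orthogonal to the
corresponding `b(w)`, the holomorphic function `w ↦ ⟪x, b(w)⟫` vanishes on an open set, hence on
the whole half-plane. At `w = m + 1` the sequence `b(w)` is supported on `{0, …, m}` with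
`bₘ ≠ 0`, so `x = 0` by strong induction. Finally eigenvectors for eigenvalues in `Ū` lie in the
linear subspace `𝔛_{C*}(Ū)`.
-/

open Complex Filter Topology ComplexConjugate
open scoped lp

lemma norm_one_sub_le_exp (z : ℂ) : ‖1 - z‖ ≤ Real.exp (-z.re + ‖z‖ ^ 2 / 2) := by
  have hsq : ‖1 - z‖ ^ 2 = 1 + 2 * (-z.re + ‖z‖ ^ 2 / 2) := by
    rw [← normSq_eq_norm_sq, ← normSq_eq_norm_sq, normSq_sub]
    simp only [map_one, one_mul, conj_re]
    ring
  have hexp : Real.exp (2 * (-z.re + ‖z‖ ^ 2 / 2)) = Real.exp (-z.re + ‖z‖ ^ 2 / 2) ^ 2 := by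
    rw [← Real.exp_nat_mul]; norm_num
  refine (pow_le_pow_iff_left₀ (norm_nonneg _) (Real.exp_nonneg _) two_ne_zero).1 ?_
  rw [hsq, ← hexp, add_comm]
  exact Real.add_one_le_exp _

lemma sum_range_inv_add_one_sq_le_two (n : ℕ) :
    ∑ k ∈ Finset.range n, (((k : ℝ) + 1) ^ 2)⁻¹ ≤ 2 := by
  have h := sum_Ioo_inv_sq_le (α := ℝ) 0 (n + 1)
  rw [← Finset.Ico_add_one_left_eq_Ioo, zero_add, Finset.sum_Ico_eq_sum_range] at h
  simpa [add_comm] using h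

lemma log_add_one_le_sum_range_inv (n : ℕ) :
    Real.log ((n : ℝ) + 1) ≤ ∑ k ∈ Finset.range n, ((k : ℝ) + 1)⁻¹ := by
  simpa [harmonic] using log_add_one_le_harmonic n

lemma summable_add_one_rpow_neg {σ : ℝ} (hσ : 1 < σ) :
    Summable fun n : ℕ => ((n : ℝ) + 1) ^ (-σ) := by
  simpa using (summable_nat_add_iff 1).2 (Real.summable_nat_rpow.2 (neg_lt_neg hσ))

lemma memℓp_two_add_one_rpow_neg {σ : ℝ} (hσ : 1 / 2 < σ) :
    Memℓp (fun n : ℕ => ((n : ℝ) + 1) ^ (-σ)) 2 := by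
  refine memℓp_gen ((summable_add_one_rpow_neg (by linarith : 1 < 2 * σ)).congr fun n => ?_)
  have hn : (0 : ℝ) ≤ n + 1 := by positivity
  rw [Real.norm_of_nonneg (by positivity), ENNReal.toReal_ofNat, ← Real.rpow_mul hn]
  ring_nf

lemma summable_mul_of_memℓp_two {α : Type*} {f g : α → ℝ} (hf : Memℓp f 2)
    (hg : Memℓp g 2) : Summable (fun i => f i * g i) := by
  simpa [mul_comm] using lp.summable_inner (𝕜 := ℝ) ⟨f, hf⟩ ⟨g, hg⟩

lemma hasSum_sub_succ_of_tendsto_zero {E : Type*} [TopologicalSpace E] [AddCommGroup E]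
    [IsTopologicalAddGroup E] [T2Space E] {g : ℕ → E} (hs : Summable fun n => g n - g (n + 1))
    (hg : Tendsto g atTop (𝓝 0)) : HasSum (fun n => g n - g (n + 1)) (g 0) := by
  rw [hs.hasSum_iff_tendsto_nat]
  simp_rw [Finset.sum_range_sub']
  simpa using tendsto_const_nhds.sub hg

noncomputable def cesaroEigenseq (w : ℂ) (n : ℕ) : ℂ :=
  ∏ k ∈ Finset.range n, (1 - w / (k + 1))

lemma cesaroEigenseq_succ (w : ℂ) (n : ℕ) :
    cesaroEigenseq w (n + 1) = cesaroEigenseq w n * (1 - w / (n + 1)) :=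
  Finset.prod_range_succ _ _

lemma norm_cesaroEigenseq_le {w : ℂ} {σ M : ℝ} (hσ : 0 ≤ σ) (hre : σ ≤ w.re) (hM : ‖w‖ ≤ M)
    (n : ℕ) : ‖cesaroEigenseq w n‖ ≤ Real.exp (M ^ 2) * ((n : ℝ) + 1) ^ (-σ) := by
  have hfactor (k : ℕ) : ‖1 - w / (k + 1)‖ ≤
      Real.exp (-σ * ((k : ℝ) + 1)⁻¹ + M ^ 2 / 2 * (((k : ℝ) + 1) ^ 2)⁻¹) := by
    have hk : (0 : ℝ) < k + 1 := by positivity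
    have hcast : (k : ℂ) + 1 = ((k + 1 : ℝ) : ℂ) := by push_cast; rfl
    refine (norm_one_sub_le_exp _).trans (Real.exp_le_exp.2 ?_)
    rw [hcast, div_ofReal_re, norm_div, norm_real, Real.norm_of_nonneg hk.le, div_pow]
    have hre' : σ * ((k : ℝ) + 1)⁻¹ ≤ w.re * ((k : ℝ) + 1)⁻¹ := by gcongr
    have hM' : ‖w‖ ^ 2 * (((k : ℝ) + 1) ^ 2)⁻¹ ≤ M ^ 2 * (((k : ℝ) + 1) ^ 2)⁻¹ := by gcongr
    linear_combination hre' + hM' / 2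
  have hsum : ∑ k ∈ Finset.range n, (-σ * ((k : ℝ) + 1)⁻¹ + M ^ 2 / 2 * (((k : ℝ) + 1) ^ 2)⁻¹)
      ≤ -σ * Real.log ((n : ℝ) + 1) + M ^ 2 := by
    rw [Finset.sum_add_distrib, ← Finset.mul_sum, ← Finset.mul_sum]
    nlinarith [log_add_one_le_sum_range_inv n, sum_range_inv_add_one_sq_le_two n, sq_nonneg M]
  calc ‖cesaroEigenseq w n‖ = ∏ k ∈ Finset.range n, ‖1 - w / (k + 1)‖ := norm_prod _ _
    _ ≤ ∏ k ∈ Finset.range n,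
          Real.exp (-σ * ((k : ℝ) + 1)⁻¹ + M ^ 2 / 2 * (((k : ℝ) + 1) ^ 2)⁻¹) :=
        Finset.prod_le_prod (fun _ _ => norm_nonneg _) fun k _ => hfactor k
    _ ≤ Real.exp (-σ * Real.log ((n : ℝ) + 1) + M ^ 2) := by
        rw [← Real.exp_sum]; exact Real.exp_le_exp.2 hsum
    _ = Real.exp (M ^ 2) * ((n : ℝ) + 1) ^ (-σ) := by
        rw [Real.exp_add, Real.rpow_def_of_pos (by positivity), mul_comm (Real.log _)]
        ring

lemma memℓp_cesaroEigenseq {w : ℂ} (hw : 1 / 2 < w.re) : Memℓp (cesaroEigenseq w) 2 :=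
  ((memℓp_two_add_one_rpow_neg hw).const_mul (Real.exp (‖w‖ ^ 2))).mono
    (norm_cesaroEigenseq_le (by linarith) le_rfl le_rfl)

lemma tendsto_cesaroEigenseq_zero {w : ℂ} (hw : 0 < w.re) :
    Tendsto (cesaroEigenseq w) atTop (𝓝 0) := by
  refine squeeze_zero_norm (norm_cesaroEigenseq_le hw.le le_rfl le_rfl) ?_
  simpa using ((tendsto_rpow_neg_atTop hw).comp
    (tendsto_atTop_add_const_right _ 1 tendsto_natCast_atTop_atTop)).const_mul
      (Real.exp (‖w‖ ^ 2))

lemma summable_cesaroEigenseq_div {w : ℂ} (hw : 0 < w.re) :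
    Summable fun n : ℕ => cesaroEigenseq w n / (n + 1) := by
  refine .of_norm_bounded
    ((summable_add_one_rpow_neg (by linarith : 1 < w.re + 1)).mul_left (Real.exp (‖w‖ ^ 2)))
    fun n => ?_
  have hn : (0 : ℝ) < n + 1 := by positivity
  rw [norm_div, show ‖(n : ℂ) + 1‖ = n + 1 by norm_cast, neg_add, ← sub_eq_add_neg,
    Real.rpow_sub_one hn.ne', mul_div_assoc']
  gcongr
  exact norm_cesaroEigenseq_le hw.le le_rfl le_rfl n

lemma hasSum_cesaroEigenseq_tail {w : ℂ} (hw : 0 < w.re) (k : ℕ) :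
    HasSum (fun n => cesaroEigenseq w (n + k) / ((n + k : ℕ) + 1)) (w⁻¹ * cesaroEigenseq w k) := by
  have hw0 : w ≠ 0 := fun h => by simp [h] at hw
  have hdiff (n : ℕ) : cesaroEigenseq w (n + k) - cesaroEigenseq w (n + 1 + k) =
      w * (cesaroEigenseq w (n + k) / ((n + k : ℕ) + 1)) := by
    rw [add_right_comm, cesaroEigenseq_succ]; push_cast; ring
  have hs : Summable fun n => cesaroEigenseq w (n + k) / ((n + k : ℕ) + 1) :=
    (summable_cesaroEigenseq_div hw).comp_injective (add_left_injective k)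
  have htel := hasSum_sub_succ_of_tendsto_zero (g := fun n => cesaroEigenseq w (n + k))
    ((hs.mul_left w).congr fun n => (hdiff n).symm)
    ((tendsto_cesaroEigenseq_zero hw).comp (tendsto_add_atTop_nat k))
  simp only [hdiff, zero_add] at htel
  simpa [hw0] using htel.mul_left w⁻¹

lemma IsCesaro.apply_single {C : ℓ²(ℕ, ℂ) →L[ℂ] ℓ²(ℕ, ℂ)} (hC : IsCesaro C) (k n : ℕ) :
    C (lp.single 2 k 1) n = if k ≤ n then ((n : ℂ) + 1)⁻¹ else 0 := by
  rw [hC]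
  simp only [lp.single_apply, Pi.single_apply, Finset.sum_ite_eq', Finset.mem_range]
  split_ifs <;> first | (exfalso; omega) | simp

lemma IsCesaro.hasSum_adjoint_apply {C : ℓ²(ℕ, ℂ) →L[ℂ] ℓ²(ℕ, ℂ)} (hC : IsCesaro C)
    (y : ℓ²(ℕ, ℂ)) (k : ℕ) :
    HasSum (fun n => y (n + k) / ((n + k : ℕ) + 1)) (C.adjoint y k) := by
  have h := lp.hasSum_inner (𝕜 := ℂ) (C (lp.single 2 k 1)) y
  rw [← ContinuousLinearMap.adjoint_inner_right, lp.inner_single_left] at h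
  simp only [RCLike.inner_apply, hC.apply_single, map_one, mul_one] at h
  rw [← hasSum_nat_add_iff' k, Finset.sum_eq_zero fun i hi => ?_, sub_zero] at h
  · simpa [div_eq_mul_inv] using h
  · rw [if_neg (by simpa using hi), map_zero, mul_zero]

lemma IsCesaro.adjoint_eq_inv_smul {C : ℓ²(ℕ, ℂ) →L[ℂ] ℓ²(ℕ, ℂ)} (hC : IsCesaro C) {w : ℂ}
    (hw : 0 < w.re) {y : ℓ²(ℕ, ℂ)} (hy : ⇑y = cesaroEigenseq w) : C.adjoint y = w⁻¹ • y :=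
  lp.ext <| funext fun k => (hC.hasSum_adjoint_apply y k).unique <| by
    simpa [hy] using hasSum_cesaroEigenseq_tail hw k

lemma differentiable_cesaroEigenseq (n : ℕ) : Differentiable ℂ fun w => cesaroEigenseq w n := by
  unfold cesaroEigenseq; fun_prop

lemma differentiableOn_tsum_mul_cesaroEigenseq {a : ℕ → ℂ} (ha : Memℓp a 2) :
    DifferentiableOn ℂ (fun w => ∑' n, a n * cesaroEigenseq w n) {w | 1 / 2 < w.re} := by
  intro w₀ hw₀
  set r := (w₀.re - 1 / 2) / 2
  have hr : 0 < r := by simp only [r]; linarith [show 1 / 2 < w₀.re from hw₀]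
  have hbound (n : ℕ) (w : ℂ) (hw : w ∈ Metric.ball w₀ r) : ‖a n * cesaroEigenseq w n‖ ≤
      ‖a n‖ * (Real.exp ((‖w₀‖ + r) ^ 2) * ((n : ℝ) + 1) ^ (-(1 / 2 + r))) := by
    rw [mem_ball_iff_norm] at hw
    have hre : 1 / 2 + r ≤ w.re := by
      have := (abs_le.1 ((abs_re_le_norm (w - w₀)).trans hw.le)).1
      simp only [sub_re, r] at this ⊢; linarith
    rw [norm_mul]
    gcongr
    exact norm_cesaroEigenseq_le (by positivity) hre
      ((norm_le_insert' w w₀).trans (by linarith)) n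
  have hsum := summable_mul_of_memℓp_two ha.norm
    ((memℓp_two_add_one_rpow_neg (by linarith : 1 / 2 < 1 / 2 + r)).const_mul
      (Real.exp ((‖w₀‖ + r) ^ 2)))
  have hdiff := differentiableOn_tsum_of_summable_norm hsum
    (fun n => ((differentiable_cesaroEigenseq n).const_mul (a n)).differentiableOn)
    Metric.isOpen_ball hbound
  exact (hdiff.differentiableAt (Metric.isOpen_ball.mem_nhds (Metric.mem_ball_self hr)))
    |>.differentiableWithinAt

lemma cesaroEigenseq_natCast_add_one_of_lt {m n : ℕ} (h : m < n) :
    cesaroEigenseq ((m : ℂ) + 1) n = 0 :=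
  Finset.prod_eq_zero (Finset.mem_range.2 h) (by rw [div_self (by norm_cast), sub_self])

lemma cesaroEigenseq_natCast_add_one_self_ne_zero (m : ℕ) :
    cesaroEigenseq ((m : ℂ) + 1) m ≠ 0 := by
  refine Finset.prod_ne_zero_iff.2 fun j hj => sub_ne_zero.2 fun h => ?_
  rw [eq_div_iff (by norm_cast), one_mul] at h
  norm_cast at h
  simp at hj; omega

lemma eq_zero_of_forall_tsum_mul_cesaroEigenseq_eq_zero {a : ℕ → ℂ}
    (h : ∀ m : ℕ, ∑' n, a n * cesaroEigenseq ((m : ℂ) + 1) n = 0) : a = 0 := by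
  funext m
  induction m using Nat.strong_induction_on with
  | _ m ih =>
    have hm := h m
    rw [tsum_eq_single m fun n hn => ?_] at hm
    · exact (mul_eq_zero.1 hm).resolve_right (cesaroEigenseq_natCast_add_one_self_ne_zero m)
    · rcases lt_or_gt_of_ne hn with hlt | hgt
      · rw [ih n hlt, Pi.zero_apply, zero_mul]
      · rw [cesaroEigenseq_natCast_add_one_of_lt hgt, mul_zero]

lemma dense_span_cesaroEigenseq {S : Set ℂ} (hSo : IsOpen S) (hSne : S.Nonempty)
    (hS : S ⊆ {w | 1 / 2 < w.re}) :
    Dense (Submodule.span ℂ {y : ℓ²(ℕ, ℂ) | ∃ w ∈ S, ⇑y = cesaroEigenseq w} : Set ℓ²(ℕ, ℂ)) := by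
  set K := Submodule.span ℂ {y : ℓ²(ℕ, ℂ) | ∃ w ∈ S, ⇑y = cesaroEigenseq w}
  suffices Kᗮ = ⊥ by
    rw [dense_iff_closure_eq, ← Submodule.topologicalClosure_coe,
      Submodule.topologicalClosure_eq_top_iff.2 this, Submodule.top_coe]
  refine (Submodule.eq_bot_iff _).2 fun x hx => ?_
  have hxS (w : ℂ) (hw : w ∈ S) : ∑' n, conj (x n) * cesaroEigenseq w n = 0 := by
    have h := (Submodule.mem_orthogonal' K x).1 hx ⟨_, memℓp_cesaroEigenseq (hS hw)⟩
      (Submodule.subset_span ⟨w, hw, rfl⟩)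
    simpa [lp.inner_eq_tsum, RCLike.inner_apply, mul_comm] using h
  obtain ⟨w₀, hw₀⟩ := hSne
  have hx_conj := (lp.memℓp x).mono' (f := fun n => conj (x n)) fun n => (RCLike.norm_conj _).le
  have hzero := ((differentiableOn_tsum_mul_cesaroEigenseq hx_conj).analyticOnNhd
    (isOpen_re_gt _)).eqOn_zero_of_preconnected_of_eventuallyEq_zero
    (convex_halfSpace_re_gt _).isPreconnected (hS hw₀)
    (eventually_of_mem (hSo.mem_nhds hw₀) hxS)
  have := eq_zero_of_forall_tsum_mul_cesaroEigenseq_eq_zero fun m =>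
    hzero (by norm_num; linarith [m.cast_nonneg (α := ℝ)])
  exact lp.ext <| funext fun n => by simpa using congrFun this n

section Glocal

variable {X : Type*} [NormedAddCommGroup X] [NormedSpace ℂ X]

def glocalSubmodule (T : X →L[ℂ] X) (F : Set ℂ) : Submodule ℂ X where
  carrier := glocalSubspace T F
  zero_mem' := ⟨0, differentiableOn_const 0, fun z _ => by simp⟩
  add_mem' := by
    rintro y₁ y₂ ⟨g₁, hg₁, he₁⟩ ⟨g₂, hg₂, he₂⟩
    refine ⟨g₁ + g₂, hg₁.add hg₂, fun z hz => ?_⟩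
    rw [← he₁ z hz, ← he₂ z hz, Pi.add_apply, map_add, smul_add]
    abel
  smul_mem' := by
    rintro c y ⟨g, hg, he⟩
    refine ⟨c • g, hg.const_smul c, fun z hz => ?_⟩
    rw [← he z hz, Pi.smul_apply, map_smul, smul_comm z c, smul_sub]

lemma mem_glocalSubspace_of_apply_eq_smul {T : X →L[ℂ] X} {F : Set ℂ} {l : ℂ} (hl : l ∈ F)
    {y : X} (hy : T y = l • y) : y ∈ glocalSubspace T F := by
  have hne (z : ℂ) (hz : z ∈ Fᶜ) : l - z ≠ 0 := sub_ne_zero.2 fun h => hz (h ▸ hl)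
  refine ⟨fun z => (l - z)⁻¹ • y, ?_, fun z hz => ?_⟩
  · exact (((differentiableOn_const l).sub differentiableOn_id).inv hne).smul_const y
  · rw [map_smul, hy, smul_comm, ← sub_smul, smul_smul, mul_inv_cancel₀ (hne z hz), one_smul]

end Glocal

lemma one_half_lt_re_inv_iff {z : ℂ} : 1 / 2 < z⁻¹.re ↔ dist z 1 < 1 := by
  rcases eq_or_ne z 0 with rfl | hz
  · norm_num
  rw [inv_re, lt_div_iff₀ (normSq_pos.2 hz), dist_eq, ← sq_lt_one_iff₀ (norm_nonneg _),
    ← normSq_eq_norm_sq, normSq_sub]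
  simp only [map_one, mul_one]
  constructor <;> intro <;> linarith

/-- for every nonempty relatively open subset `U` of the closed disc
`{z : |z - 1| ≤ 1}`, the glocal spectral subspace `𝔛_{C*}(Ū)` of the adjoint Cesàro
operator is dense in ℓ². -/
theorem stmt_19 (C : lp (fun _ : ℕ => ℂ) 2 →L[ℂ] lp (fun _ : ℕ => ℂ) 2)
    (hC : IsCesaro C) (U : Set ℂ) (hUne : U.Nonempty)
    (hUopen : ∃ V : Set ℂ, IsOpen V ∧ U = V ∩ {z : ℂ | ‖z - 1‖ ≤ 1}) :
    Dense (glocalSubspace (ContinuousLinearMap.adjoint C) (closure U)) := by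
  obtain ⟨V, hV, rfl⟩ := hUopen
  obtain ⟨z₀, hz₀V, hz₀⟩ := hUne
  have hz₀D : z₀ ∈ closure (Metric.ball (1 : ℂ) 1) := by
    rwa [closure_ball _ one_ne_zero, Metric.mem_closedBall, dist_eq]
  obtain ⟨z₁, hz₁V, hz₁D⟩ := mem_closure_iff.1 hz₀D V hV hz₀V
  set S := {w : ℂ | 1 / 2 < w.re} ∩ (fun w => w⁻¹) ⁻¹' V
  have hH0 : {w : ℂ | 1 / 2 < w.re} ⊆ {0}ᶜ := fun w hw h => by
    norm_num [Set.mem_singleton_iff.1 h] at hw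
  have hSo : IsOpen S :=
    (continuousOn_inv₀.mono hH0).isOpen_inter_preimage (isOpen_re_gt _) hV
  have hSne : S.Nonempty := ⟨z₁⁻¹, one_half_lt_re_inv_iff.2 hz₁D, by simpa using hz₁V⟩
  refine (dense_span_cesaroEigenseq hSo hSne Set.inter_subset_left).mono ?_
  change _ ≤ glocalSubmodule _ _
  rw [Submodule.span_le]
  rintro y ⟨w, ⟨hw, hwV⟩, hy⟩
  have hwU : w⁻¹ ∈ V ∩ {z : ℂ | ‖z - 1‖ ≤ 1} :=
    ⟨hwV, by simpa [← dist_eq] using (one_half_lt_re_inv_iff.1 (by rwa [inv_inv])).le⟩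
  exact mem_glocalSubspace_of_apply_eq_smul (subset_closure hwU)
    (hC.adjoint_eq_inv_smul (one_half_pos.trans hw) hy)
end
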